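/- Let V be a finite-dimensional real inner product space, Z : V → ℂ an ℝ-linear map, and S ⊆ V \ {0} a set. Suppose Q is a quadratic form on V such that Q is negative definite on ker Z (i.e. Q(v) < 0 for all nonzero v ∈ ker Z) and Q(v) ≥ 0 for all v ∈ S. Then there exists a constant C > 0 such that ‖v‖ ≤ C·|Z(v)| for all v ∈ S. -/

import Mathlib

theorem support_property_of_quadratic_form
    {V : Type*} [NormedAddCommGroup V] [InnerProductSpace ℝ V] [FiniteDimensional ℝ V]
    (Z : V →ₗ[ℝ] ℂ) (S : Set V) (hS : ∀ v ∈ S, v ≠ 0)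
    (Q : QuadraticForm ℝ V)
    (hker : ∀ v ∈ LinearMap.ker Z, v ≠ 0 → Q v < 0)
    (hQS : ∀ v ∈ S, 0 ≤ Q v) :
    ∃ C > 0, ∀ v ∈ S, ‖v‖ ≤ C * ‖Z v‖ := by
  -- continuity of Q
  set B := QuadraticMap.associated (R := ℝ) Q with hB
  have hQB : ∀ v, Q v = B v v := by
    intro v
    have h4 : Q (v + v) = 4 * Q v := by
      rw [← two_smul ℝ v, QuadraticMap.map_smul]
      norm_num [smul_eq_mul]
    rw [hB]
    simp [QuadraticMap.associated_apply, h4]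
    ring
  have hQcont : Continuous fun v : V => Q v := by
    have h1 : Continuous fun v : V => (LinearMap.toContinuousLinearMap (B v)) := by
      exact LinearMap.continuous_of_finiteDimensional
        ((LinearMap.toContinuousLinearMap : (V →ₗ[ℝ] ℝ) ≃ₗ[ℝ] V →L[ℝ] ℝ).toLinearMap.comp B)
    have h2 : Continuous fun v : V => (LinearMap.toContinuousLinearMap (B v)) v :=
      h1.clm_apply continuous_id
    simpa [hQB] using h2
  have hZcont : Continuous fun v : V => ‖Z v‖ :=
    continuous_norm.comp Z.continuous_of_finiteDimensional
  set K : Set V := {v | ‖v‖ = 1 ∧ 0 ≤ Q v} with hKdef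
  have hKclosed : IsClosed K := by
    have : K = (Metric.sphere (0:V) 1) ∩ (fun v : V => Q v) ⁻¹' (Set.Ici 0) := by
      ext v; simp [hKdef, mem_sphere_zero_iff_norm]
    rw [this]
    exact (Metric.isClosed_sphere).inter (isClosed_Ici.preimage hQcont)
  have hKcompact : IsCompact K := by
    apply Metric.isCompact_of_isClosed_isBounded hKclosed
    apply Metric.isBounded_closedBall (x := (0:V)) (r := 1) |>.subset
    intro v hv
    simp only [Metric.mem_closedBall, dist_zero_right]
    exact hv.1.le
  -- membership of normalized vectors
  have hmem : ∀ v ∈ S, (‖v‖⁻¹ • v) ∈ K := by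
    intro v hv
    have hv0 : v ≠ 0 := hS v hv
    have hnv : ‖v‖ ≠ 0 := norm_ne_zero_iff.mpr hv0
    constructor
    · rw [norm_smul]
      simp [abs_of_nonneg (norm_nonneg v), hnv]
    · rw [QuadraticMap.map_smul]
      have := hQS v hv
      have h2 : (0:ℝ) ≤ ‖v‖⁻¹ * ‖v‖⁻¹ := by positivity
      simpa [smul_eq_mul] using mul_nonneg h2 this
  rcases Set.eq_empty_or_nonempty S with hSe | ⟨v0, hv0⟩
  · exact ⟨1, one_pos, by simp [hSe]⟩
  have hKne : K.Nonempty := ⟨_, hmem v0 hv0⟩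
  obtain ⟨w, hwK, hwmin⟩ := hKcompact.exists_isMinOn hKne hZcont.continuousOn
  have hw0 : w ≠ 0 := by
    intro h
    rw [h] at hwK
    simp [hKdef] at hwK
  have hε : 0 < ‖Z w‖ := by
    rcases eq_or_ne (Z w) 0 with h | h
    · exact absurd (hker w (LinearMap.mem_ker.mpr h) hw0) (not_lt.mpr hwK.2)
    · exact norm_pos_iff.mpr h
  refine ⟨(‖Z w‖)⁻¹, inv_pos.mpr hε, ?_⟩
  intro v hv
  have hv0 : v ≠ 0 := hS v hv
  have hnv : (0:ℝ) < ‖v‖ := norm_pos_iff.mpr hv0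
  have h1 : ‖Z w‖ ≤ ‖Z (‖v‖⁻¹ • v)‖ := hwmin (hmem v hv)
  have h2 : ‖Z (‖v‖⁻¹ • v)‖ = ‖v‖⁻¹ * ‖Z v‖ := by
    rw [map_smul]
    simp [norm_smul, abs_of_nonneg (le_of_lt (inv_pos.mpr hnv))]
  rw [h2] at h1
  have key : ‖Z w‖ * ‖v‖ ≤ ‖Z v‖ := by
    calc ‖Z w‖ * ‖v‖ ≤ (‖v‖⁻¹ * ‖Z v‖) * ‖v‖ :=
          mul_le_mul_of_nonneg_right h1 hnv.le
    _ = ‖Z v‖ := by field_simp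
  rw [le_inv_mul_iff₀ hε]
  exact key
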